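/- Let H be any group and let W = (ℤ → H) ⋊ ℤ be the (cartesian, i.e., unrestricted) wreath product of H by ℤ, the semidirect product of the full direct product of copies of H indexed by ℤ with ℤ acting by shifting coordinates. Then the copy of H in the base group consisting of functions ℤ → H supported at 0 is contained in the derived subgroup W′ of W, and this copy is a subnormal subgroup of W of defect at most 2 (it is normal in the base group, which is normal in W). -/

import Mathlib

/-- The shift automorphism of the full cartesian power `ℤ → H` by `n : ℤ`:
`(shiftEquiv H n f) i = f (i - n)`. -/
def shiftEquiv (H : Type*) [Group H] (n : ℤ) : (ℤ → H) ≃* (ℤ → H) where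
  toFun f i := f (i - n)
  invFun f i := f (i + n)
  left_inv f := funext fun i => by simp
  right_inv f := funext fun i => by simp
  map_mul' f g := rfl

/-- The shift action of `ℤ` (written multiplicatively) on `ℤ → H`. -/
def shiftHom (H : Type*) [Group H] : Multiplicative ℤ →* MulAut (ℤ → H) where
  toFun n := shiftEquiv H (Multiplicative.toAdd n)
  map_one' := by
    ext f i
    simp [shiftEquiv]
  map_mul' m n := by
    ext f i
    simp [shiftEquiv, sub_add_eq_sub_sub]

/-- The (cartesian, unrestricted) wreath product `H Wr ℤ = (ℤ → H) ⋊ ℤ`,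
with `ℤ` acting by shifting coordinates. -/
abbrev CartesianWreathZ (H : Type*) [Group H] :=
  (ℤ → H) ⋊[shiftHom H] Multiplicative ℤ

/-- The base group `ℤ → H` viewed inside the wreath product. -/
def baseSubgroup (H : Type*) [Group H] : Subgroup (CartesianWreathZ H) :=
  (SemidirectProduct.inl : (ℤ → H) →* CartesianWreathZ H).range

/-- The copy of `H` inside the wreath product consisting of functions `ℤ → H`
supported at `0`. -/
def copyAtZero (H : Type*) [Group H] : Subgroup (CartesianWreathZ H) :=
  (Subgroup.pi Set.univ (fun i : ℤ => if i = 0 then (⊤ : Subgroup H) else ⊥)).map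
    (SemidirectProduct.inl : (ℤ → H) →* CartesianWreathZ H)

/-! The element of the base group supported at `0` with value `a` is the discrete derivative
`f · (shift f)⁻¹` of the step function `f` equal to `a` on `[0, ∞)` and to `1` elsewhere; in the
wreath product this is the commutator `⁅f, t⁆` with the generator `t` of `ℤ`. Subnormality holds
because the copy of `H` is the image of a normal subgroup of the base group `ℤ → H`, and the
base group is the kernel of the projection onto `ℤ`. -/

open SemidirectProduct
open scoped commutatorElement

theorem Subgroup.pi_normal {ι : Type*} {G : ι → Type*} [∀ i, Group (G i)] (I : Set ι)
    {K : ∀ i, Subgroup (G i)} (hK : ∀ i, (K i).Normal) : (Subgroup.pi I K).Normal :=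
  ⟨fun _ hn g i hi => (hK i).conj_mem _ (hn i hi) (g i)⟩

theorem Subgroup.Normal.map_subgroupOf_range {G W : Type*} [Group G] [Group W]
    {N : Subgroup G} (hN : N.Normal) (f : G →* W) : ((N.map f).subgroupOf f.range).Normal := by
  rw [normal_subgroupOf_iff_le_normalizer (map_le_range f N), MonoidHom.range_eq_map,
    ← normalizer_eq_top_iff.mpr hN]
  exact le_normalizer_map f

theorem Subgroup.mem_pi_ite_top_bot_iff {ι G : Type*} [Group G] [DecidableEq ι] {j : ι}
    {g : ι → G} :
    g ∈ Subgroup.pi Set.univ (fun i => if i = j then (⊤ : Subgroup G) else ⊥) ↔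
      g = Pi.mulSingle j (g j) := by
  refine ⟨fun hg => funext fun i => ?_, fun hg => hg ▸ ?_⟩
  · by_cases hi : i = j
    · subst hi; simp
    · simpa [hi] using hg i (Set.mem_univ i)
  · intro i _
    by_cases hi : i = j <;> simp [hi]

theorem SemidirectProduct.commutatorElement_inl_inr {N G : Type*} [Group N] [Group G]
    {φ : G →* MulAut N} (n : N) (g : G) :
    ⁅(inl n : N ⋊[φ] G), (inr g : N ⋊[φ] G)⁆ = inl (n * φ g n⁻¹) := by
  rw [commutatorElement_def, map_mul, inl_aut, map_inv, map_inv]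
  group

theorem mulSingle_zero_eq_mul_shift_inv {H : Type*} [Group H] (a : H) :
    Pi.mulSingle 0 a = (fun i : ℤ => if 0 ≤ i then a else 1) *
      shiftHom H (Multiplicative.ofAdd 1) (fun i : ℤ => if 0 ≤ i then a else 1)⁻¹ := by
  funext i
  simp only [shiftHom, shiftEquiv, MonoidHom.coe_mk, OneHom.coe_mk, MulEquiv.coe_mk,
    Equiv.coe_fn_mk, Pi.mul_apply, Pi.inv_apply, toAdd_ofAdd]
  rcases lt_trichotomy i 0 with h | rfl | h
  · simp [h.ne, h.not_ge, show ¬ 1 ≤ i by omega]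
  · simp
  · simp [h.ne', h.le, show 1 ≤ i by omega]

theorem copyAtZero_le_commutator (H : Type*) [Group H] :
    copyAtZero H ≤ commutator (CartesianWreathZ H) := by
  rintro _ ⟨g, hg, rfl⟩
  rw [Subgroup.mem_pi_ite_top_bot_iff.mp hg, mulSingle_zero_eq_mul_shift_inv,
    ← commutatorElement_inl_inr]
  exact Subgroup.commutator_mem_commutator (Subgroup.mem_top _) (Subgroup.mem_top _)

theorem copyAtZero_le_commutator_and_subnormal_of_defect_two
    (H : Type*) [Group H] :
    copyAtZero H ≤ commutator (CartesianWreathZ H) ∧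
    copyAtZero H ≤ baseSubgroup H ∧
    ((copyAtZero H).subgroupOf (baseSubgroup H)).Normal ∧
    (baseSubgroup H).Normal := by
  refine ⟨copyAtZero_le_commutator H, Subgroup.map_le_range _ _, ?_, ?_⟩
  · refine (Subgroup.pi_normal _ fun i => ?_).map_subgroupOf_range _
    split_ifs <;> infer_instance
  · rw [baseSubgroup, range_inl_eq_ker_rightHom]
    exact MonoidHom.normal_ker _
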